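/- arXiv:2402.13365 — 5 statements merged into one kernel-verified Lean document; each statement's English description precedes it below -/
import Mathlib

section
/- Let G be a finite group. Then the intersection of the normalizers of all self-normalizing subgroups of G equals the hypercenter Z_∞(G) of G. That is, ⋂_{H ≤ G, N_G(H) = H} N_G(H) = Z_∞(G). -/
/-!
The upper central series lies in every self-normalizing subgroup `H`: if `Z_n ≤ H` and
`x ∈ Z_{n+1}`, then `x h x⁻¹ = ⁅x, h⁆ h` with `⁅x, h⁆ ∈ Z_n`, so `x` normalizes `H`.

Conversely, let `I` be the intersection of the self-normalizing subgroups. It is normal, and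
since normalizers of Sylow subgroups are self-normalizing, `I` normalizes every Sylow subgroup.
Both properties pass to the image of `I` in `G ⧸ Z_∞(G)`, whose center is trivial, so it is
enough to show that a normal subgroup `K` normalizing every Sylow subgroup of a centerless
group is trivial. Otherwise pick `x ∈ K` of prime order `p` and a Sylow `p`-subgroup `S ∋ x`.
A `p`-subgroup normalizing a Sylow `p`-subgroup lies in it, so `K ⊓ S` lies in every Sylow
`p`-subgroup; hence for a Sylow `q`-subgroup `Q`, `q ≠ p`, the commutators `⁅K ⊓ S, Q⁆` lie in
`S ⊓ Q = ⊥`. The nontrivial normal subgroup `K ⊓ S` of the `p`-group `S` contains some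
`b ≠ 1` central in `S`. Then the centralizer of `b` contains a Sylow subgroup for every prime,
so it is all of `G` and `b` is central, a contradiction.
-/

open scoped commutatorElement

namespace Subgroup

variable {G : Type*} [Group G]

theorem upperCentralSeries_le_of_normalizer_eq {H : Subgroup G}
    (hH : normalizer (H : Set G) = H) : ∀ n, upperCentralSeries G n ≤ H
  | 0 => bot_le
  | n + 1 => fun x hx => hH ▸ mem_normalizer_iff.mpr fun h => by
      rw [← MulAut.conj_apply, conj_eq_commutatorElement_mul,
        H.mul_mem_cancel_left (upperCentralSeries_le_of_normalizer_eq hH n (hx h))]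

theorem center_quotient_upperCentralSeries_eq_bot {n : ℕ}
    (hn : upperCentralSeries G (n + 1) = upperCentralSeries G n) :
    center (G ⧸ upperCentralSeries G n) = ⊥ := by
  apply comap_injective (QuotientGroup.mk'_surjective (upperCentralSeries G n))
  rw [← upperCentralSeriesStep_eq_comap_center, MonoidHom.comap_bot, QuotientGroup.ker_mk']
  exact hn

theorem exists_upperCentralSeries_succ_eq_and_eq_iSup [Finite G] :
    ∃ n, upperCentralSeries G (n + 1) = upperCentralSeries G n ∧
      upperCentralSeries G n = ⨆ m, upperCentralSeries G m := by
  obtain ⟨n, hn⟩ := WellFoundedGT.monotone_chain_condition ⟨_, upperCentralSeries_mono G⟩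
  refine ⟨n, (hn (n + 1) n.le_succ).symm, le_antisymm (le_iSup _ n) (iSup_le fun m => ?_)⟩
  exact (upperCentralSeries_mono G (le_max_right n m)).trans (hn _ (le_max_left n m)).ge

theorem normal_iInf_normalizer_of_normalizer_eq :
    (⨅ H ∈ {H : Subgroup G | normalizer (H : Set G) = H}, normalizer (H : Set G)).Normal where
  conj_mem x hx g := by
    simp only [Set.mem_ofPred_eq, mem_iInf] at hx ⊢
    intro H hH
    let H' := H.map (MulAut.conj g⁻¹).toMonoidHom
    have hH' : normalizer (H' : Set G) = H' := by
      rw [← map_equiv_normalizer_eq, hH]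
    have hxH' := hx H' hH'
    rw [hH', mem_map_equiv] at hxH'
    rw [hH]
    simpa using hxH'

theorem iInf_normalizer_le_of_normalizer_eq {H : Subgroup G}
    (hH : normalizer (H : Set G) = H) :
    ⨅ K ∈ {K : Subgroup G | normalizer (K : Set G) = K}, normalizer (K : Set G) ≤ H :=
  iInf₂_le_of_le H hH hH.le

theorem normalizer_comap_eq_self {N : Type*} [Group N] {f : G →* N}
    (hf : Function.Surjective f) {H : Subgroup N} (hH : normalizer (H : Set N) = H) :
    normalizer (H.comap f : Set G) = H.comap f := by
  rw [← comap_normalizer_eq_of_surjective H hf, hH]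

theorem eq_top_of_forall_sylow_le [Finite G] {H : Subgroup G}
    (hH : ∀ (p : ℕ) [Fact p.Prime], ∃ P : Sylow p G, (P : Subgroup G) ≤ H) : H = ⊤ := by
  rw [← index_eq_one, Nat.eq_one_iff_not_exists_prime_dvd]
  intro p hp hpH
  have := Fact.mk hp
  obtain ⟨P, hP⟩ := hH p
  exact P.not_dvd_index (hpH.trans (index_dvd_of_le hP))

end Subgroup

theorem IsPGroup.inf_center_ne_bot {G : Type*} [Group G] [Finite G] {p : ℕ} [Fact p.Prime]
    (hG : IsPGroup p G) {N : Subgroup G} [N.Normal] (hN : N ≠ ⊥) :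
    N ⊓ Subgroup.center G ≠ ⊥ := by
  have : Nontrivial N := N.nontrivial_iff_ne_bot.mpr hN
  have hpN : p ∣ Nat.card N :=
    (hG.to_subgroup N).card_eq_or_dvd.resolve_left Finite.one_lt_card.ne'
  obtain ⟨b, hb, hb1⟩ := (hG.of_equiv ConjAct.toConjAct)
    |>.exists_fixed_point_of_prime_dvd_card_of_fixed_point N hpN (a := 1) (by simp)
  have hbZ : (b : G) ∈ Subgroup.center G := Subgroup.mem_center_iff.mpr fun g => by
    have := congrArg Subtype.val (hb (ConjAct.toConjAct g))
    rw [ConjAct.Subgroup.val_conj_smul, ConjAct.toConjAct_smul] at this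
    exact mul_inv_eq_iff_eq_mul.mp this
  exact Subgroup.ne_bot_iff_exists_ne_one.mpr
    ⟨⟨b, b.2, hbZ⟩, fun h => hb1 (Subtype.ext (congrArg Subtype.val h).symm)⟩

namespace Sylow

variable {G : Type*} [Group G] {p : ℕ} {K : Subgroup G}

theorem inf_le_of_le_normalizer (hK : ∀ T : Sylow p G, K ≤ Subgroup.normalizer (T : Set G))
    (S T : Sylow p G) : K ⊓ S ≤ T := by
  have := (IsPGroup.to_inf_right (H := K) S.isPGroup').inf_normalizer_sylow T
  rw [inf_eq_left.mpr (inf_le_left.trans (hK T))] at this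
  exact inf_eq_left.mp this.symm

theorem inf_le_centralizer_of_le_normalizer [Fact p.Prime] {q : ℕ} [Fact q.Prime] (hpq : p ≠ q)
    (hKp : ∀ T : Sylow p G, K ≤ Subgroup.normalizer (T : Set G))
    (hKq : ∀ T : Sylow q G, K ≤ Subgroup.normalizer (T : Set G))
    (S : Sylow p G) (Q : Sylow q G) : K ⊓ S ≤ Subgroup.centralizer (Q : Set G) := by
  intro b hb y hy
  have hcQ : ⁅b, y⁆ ∈ (Q : Subgroup G) :=
    Q.mul_mem ((Subgroup.mem_normalizer_iff.mp (hKq Q hb.1) y).mp hy) (Q.inv_mem hy)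
  have hcS : ⁅b, y⁆ ∈ (S : Subgroup G) := by
    have hb' := inf_le_of_le_normalizer hKp S (y⁻¹ • S) (inv_mem hb)
    rw [Sylow.coe_subgroup_smul, Subgroup.mem_pointwise_smul_iff_inv_smul_mem] at hb'
    have hconj : y * b⁻¹ * y⁻¹ ∈ (S : Subgroup G) := by simpa [mul_assoc] using hb'
    simpa [commutatorElement_def, mul_assoc] using S.mul_mem hb.2 hconj
  have hc1 := Subgroup.disjoint_def.mp
    (IsPGroup.disjoint_of_ne p q hpq _ _ S.isPGroup' Q.isPGroup') hcS hcQ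
  exact (commutatorElement_eq_one_iff_mul_comm.mp hc1).symm

end Sylow

namespace Subgroup

variable {G : Type*} [Group G]

theorem eq_bot_of_le_normalizer_sylow [Finite G] (hZ : center G = ⊥) {K : Subgroup G}
    [K.Normal] (hK : ∀ (p : ℕ) [Fact p.Prime] (T : Sylow p G), K ≤ normalizer (T : Set G)) :
    K = ⊥ := by
  by_contra hK0
  have : Nontrivial K := K.nontrivial_iff_ne_bot.mpr hK0
  obtain ⟨p, hp, hpK⟩ := Nat.exists_prime_and_dvd (Finite.one_lt_card (α := K)).ne'
  have := Fact.mk hp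
  obtain ⟨x, hx⟩ := exists_prime_orderOf_dvd_card' p hpK
  have hx1 : x ≠ 1 := fun h => hp.one_lt.ne' (by rw [← hx, h, orderOf_one])
  have hxp : IsPGroup p (zpowers (x : G)) :=
    IsPGroup.of_card (n := 1) (by rw [Nat.card_zpowers, orderOf_coe, hx, pow_one])
  obtain ⟨S, hS⟩ := hxp.exists_le_sylow
  have hKS : K.subgroupOf S ≠ ⊥ := ne_bot_iff_exists_ne_one.mpr
    ⟨⟨⟨x, hS (mem_zpowers _)⟩, x.2⟩,
      fun h => hx1 (Subtype.ext (congrArg (Subtype.val ∘ Subtype.val) h))⟩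
  obtain ⟨⟨b, hbK, hbZ⟩, hb1⟩ :=
    ne_bot_iff_exists_ne_one.mp (S.isPGroup'.inf_center_ne_bot hKS)
  have hcent : centralizer {(b : G)} = ⊤ := eq_top_of_forall_sylow_le fun q _ => by
    rcases eq_or_ne p q with rfl | hpq
    · exact ⟨S, fun s hs => mem_centralizer_singleton_iff.mpr
        (congrArg Subtype.val (mem_center_iff.mp hbZ ⟨s, hs⟩))⟩
    · obtain ⟨Q⟩ : Nonempty (Sylow q G) := inferInstance
      have := Sylow.inf_le_centralizer_of_le_normalizer hpq (hK p) (hK q) S Q ⟨hbK, b.2⟩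
      exact ⟨Q, fun y hy =>
        mem_centralizer_singleton_iff.mpr (mem_centralizer_iff.mp this y hy)⟩
  have hbG : (b : G) ∈ center G := centralizer_eq_top_iff_subset.mp hcent rfl
  rw [hZ, mem_bot] at hbG
  exact hb1 (Subtype.ext (Subtype.ext hbG))

end Subgroup

theorem intersection_selfNormalizing_eq_hypercenter
    (G : Type*) [Group G] [Finite G] :
    (⨅ H ∈ {H : Subgroup G | Subgroup.normalizer (H : Set G) = H}, Subgroup.normalizer ((H : Subgroup G) : Set G)) =
      ⨆ n, upperCentralSeries G n := by
  obtain ⟨n, hn, hsup⟩ := Subgroup.exists_upperCentralSeries_succ_eq_and_eq_iSup (G := G)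
  refine le_antisymm ?_ (iSup_le fun m => le_iInf₂ fun H hH =>
    (Subgroup.upperCentralSeries_le_of_normalizer_eq hH m).trans_eq hH.symm)
  let π := QuotientGroup.mk' (Subgroup.upperCentralSeries G n)
  have hπ : Function.Surjective π := QuotientGroup.mk'_surjective _
  have := Subgroup.normal_iInf_normalizer_of_normalizer_eq.map π hπ
  have hπI := Subgroup.eq_bot_of_le_normalizer_sylow
    (Subgroup.center_quotient_upperCentralSeries_eq_bot hn) fun p _ T =>
      Subgroup.map_le_iff_le_comap.mpr (Subgroup.iInf_normalizer_le_of_normalizer_eq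
        (Subgroup.normalizer_comap_eq_self hπ T.normalizer_normalizer))
  rw [Subgroup.map_eq_bot_iff, QuotientGroup.ker_mk'] at hπI
  exact hπI.trans hsup.le
end

section
/- Let G be a group and let H be a weakly normal subgroup of G. Then H satisfies the subnormalizer condition in G. -/
/-- The conjugate `H^g = g⁻¹ H g` of a subgroup `H`. -/
def conjSubgroup {G : Type*} [Group G] (g : G) (H : Subgroup G) : Subgroup G :=
  H.map (MulAut.conj g⁻¹).toMonoidHom

/-- `H` is pronormal in `G` if for every `g ∈ G` there exists
`x ∈ ⟨H, H^g⟩` with `H^x = H^g`. -/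
def IsPronormal {G : Type*} [Group G] (H : Subgroup G) : Prop :=
  ∀ g : G, ∃ x ∈ H ⊔ conjSubgroup g H, conjSubgroup x H = conjSubgroup g H

/-- `H` is weakly normal in `G` if `H^g ≤ N_G(H)` implies `g ∈ N_G(H)`. -/
def IsWeaklyNormal {G : Type*} [Group G] (H : Subgroup G) : Prop :=
  ∀ g : G, conjSubgroup g H ≤ Subgroup.normalizer (H : Set G) → g ∈ Subgroup.normalizer (H : Set G)

/-- `H` is an `𝓗`-subgroup of `G` if `N_G(H) ∩ H^g ≤ H` for all `g ∈ G`. -/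
def IsHSubgroup {G : Type*} [Group G] (H : Subgroup G) : Prop :=
  ∀ g : G, Subgroup.normalizer (H : Set G) ⊓ conjSubgroup g H ≤ H

/-- `H` is an `NE`-subgroup of `G` if `H = N_G(H) ∩ H^G`. -/
def IsNESubgroup {G : Type*} [Group G] (H : Subgroup G) : Prop :=
  H = Subgroup.normalizer (H : Set G) ⊓ Subgroup.normalClosure (H : Set G)

/-- A subgroup `H` satisfies the subnormalizer condition in `G` if for every
subgroup `K` of `G` such that `H` is a normal subgroup of `K`, one has
`N_G(K) ≤ N_G(H)`. -/
def SubnormalizerCondition {G : Type*} [Group G] (H : Subgroup G) : Prop :=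
  ∀ K : Subgroup G, H ≤ K → (H.subgroupOf K).Normal → Subgroup.normalizer (K : Set G) ≤ Subgroup.normalizer (H : Set G)

theorem conjSubgroup_le_of_mem_normalizer {G : Type*} [Group G] {g : G} {H K : Subgroup G}
    (hHK : H ≤ K) (hg : g ∈ Subgroup.normalizer (K : Set G)) : conjSubgroup g H ≤ K :=
  (Subgroup.map_mono hHK).trans (Subgroup.mem_normalizer_iff_map_conj_eq.mp (inv_mem hg)).le

theorem subnormalizerCondition_of_isWeaklyNormal
    {G : Type*} [Group G] {H : Subgroup G} (h : IsWeaklyNormal H) :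
    SubnormalizerCondition H := by
  intro K hHK hHnormalK g hg
  have hK : K ≤ Subgroup.normalizer (H : Set G) :=
    (Subgroup.normal_subgroupOf_iff_le_normalizer hHK).mp hHnormalK
  exact h g ((conjSubgroup_le_of_mem_normalizer hHK hg).trans hK)
end

section
/- Let G be a group and let H be an NE-subgroup of G. Then H satisfies the subnormalizer condition in G. -/
/-! If `H ⊴ K` then `K ≤ N_G(H)`. For `g ∈ N_G(K)` the conjugate `H^g` lies in `K ≤ N_G(H)` and
in the normal closure `H^G`, hence in `N_G(H) ∩ H^G = H`; the same holds for `g⁻¹`, so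
`g ∈ N_G(H)`. -/

open Subgroup

namespace IsNESubgroup

variable {G : Type*} [Group G] {H : Subgroup G}

theorem conj_mem (hH : IsNESubgroup H) {g x : G} (hx : x ∈ H)
    (hgx : g * x * g⁻¹ ∈ normalizer (H : Set G)) : g * x * g⁻¹ ∈ H := by
  have hmem : g * x * g⁻¹ ∈ normalizer (H : Set G) ⊓ normalClosure (H : Set G) :=
    ⟨hgx, normalClosure_normal.conj_mem x (subset_normalClosure hx) g⟩
  rwa [← hH] at hmem

theorem normalizer_le_normalizer (hH : IsNESubgroup H) {K : Subgroup G} (hHK : H ≤ K)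
    (hKN : K ≤ normalizer (H : Set G)) :
    normalizer (K : Set G) ≤ normalizer (H : Set G) := by
  have conj_mem_of_mem_normalizer {g : G} (hg : g ∈ normalizer (K : Set G)) {x : G}
      (hx : x ∈ H) : g * x * g⁻¹ ∈ H :=
    hH.conj_mem hx (hKN ((mem_normalizer_iff.mp hg x).mp (hHK hx)))
  intro g hg
  refine mem_normalizer_iff.mpr fun x => ⟨conj_mem_of_mem_normalizer hg, fun hx => ?_⟩
  simpa [mul_assoc] using conj_mem_of_mem_normalizer (inv_mem hg) hx

end IsNESubgroup

theorem subnormalizerCondition_of_isNESubgroup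
    {G : Type*} [Group G] {H : Subgroup G} (h : IsNESubgroup H) :
    SubnormalizerCondition H := fun _ hHK hN =>
  h.normalizer_le_normalizer hHK (le_normalizer_of_normal_subgroupOf (hK := hN) hHK)
end

section
/- Let G be a finite group. Then the intersection of the normalizers of all pronormal subgroups of G equals the intersection of the normalizers of all Sylow subgroups of G (equivalently, the hypercenter Z_∞(G)). That is, ⋂_{H pronormal in G} N_G(H) = ⋂_{p prime, P ∈ Syl_p(G)} N_G(P). -/
/-! Sylow subgroups are pronormal, since any two Sylow `p`-subgroups of `⟨P, P^g⟩` are conjugate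
inside it. Conversely the hypercenter `Z_∞(G) = ⋃ Zₙ(G)` normalizes every pronormal `H`: if
`z ∈ Zₙ₊₁(G)` then `H^z ≤ H Zₙ(G) ≤ N_G(H)` by induction, so the element `x ∈ ⟨H, H^z⟩` with
`H^x = H^z` normalizes `H`. Finally (Baer) the intersection `S` of the Sylow normalizers lies in
`Z_∞(G)`: `S` is generated by the normal subgroups `S ∩ P`, and `S ∩ P` is centralized by every
Sylow `q`-subgroup for `q ≠ p`, so `G = P C_G(S ∩ P)` acts on `S ∩ P` through the nilpotent
group `P`. -/

open Subgroup
open scoped commutatorElement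

section Conjugation

variable {G : Type*} [Group G]

theorem mem_conjSubgroup {g y : G} {H : Subgroup G} :
    y ∈ conjSubgroup g H ↔ g * y * g⁻¹ ∈ H := by
  constructor
  · rintro ⟨h, hh, rfl⟩
    simpa [mul_assoc] using hh
  · intro h
    exact ⟨g * y * g⁻¹, h, by simp [mul_assoc]⟩

theorem conjSubgroup_eq_self_iff {g : G} {H : Subgroup G} :
    conjSubgroup g H = H ↔ g ∈ normalizer (H : Set G) := by
  simp only [SetLike.ext_iff, mem_conjSubgroup, mem_normalizer_iff]
  exact forall_congr' fun _ => Iff.comm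

theorem Sylow.conjSubgroup_eq {p : ℕ} (P : Sylow p G) (g : G) :
    conjSubgroup g (P : Subgroup G) = ((g⁻¹ • P : Sylow p G) : Subgroup G) :=
  rfl

theorem Sylow.isPronormal [Finite G] {p : ℕ} [Fact p.Prime] (P : Sylow p G) :
    IsPronormal (P : Subgroup G) := by
  intro g
  set K := (P : Subgroup G) ⊔ conjSubgroup g P
  have hPK : (P : Subgroup G) ≤ K := le_sup_left
  have hQK : ((g⁻¹ • P : Sylow p G) : Subgroup G) ≤ K := le_sup_right
  obtain ⟨k, hk⟩ := MulAction.exists_smul_eq K (P.subtype hPK) ((g⁻¹ • P).subtype hQK)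
  rw [Sylow.smul_subtype] at hk
  refine ⟨(k : G)⁻¹, inv_mem k.2, ?_⟩
  rw [Sylow.conjSubgroup_eq, Sylow.conjSubgroup_eq, inv_inv]
  exact congrArg _ (Sylow.subtype_injective hk)

end Conjugation

namespace Subgroup

variable (G : Type*) [Group G]

def hypercenter : Subgroup G :=
  ⨆ n, upperCentralSeries G n

variable {G}

theorem upperCentralSeries_le_hypercenter (n : ℕ) : upperCentralSeries G n ≤ hypercenter G :=
  le_iSup (upperCentralSeries G) n

theorem conjSubgroup_le_sup_upperCentralSeries {n : ℕ} {z : G}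
    (hz : z ∈ upperCentralSeries G (n + 1)) (H : Subgroup G) :
    conjSubgroup z H ≤ H ⊔ upperCentralSeries G n := by
  rintro _ ⟨h, hh, rfl⟩
  have hcomm : ⁅z⁻¹, h⁻¹⁆ ∈ upperCentralSeries G n :=
    mem_upperCentralSeries_succ_iff.mp (inv_mem hz) h⁻¹
  have hconj : (MulAut.conj z⁻¹).toMonoidHom h = h * ⁅z⁻¹, h⁻¹⁆⁻¹ := by
    simp [commutatorElement_def, mul_assoc]
  rw [hconj]
  exact mul_mem (mem_sup_left hh) (mem_sup_right (inv_mem hcomm))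

end Subgroup

namespace IsPronormal

variable {G : Type*} [Group G] {H : Subgroup G}

theorem mem_normalizer_of_sup_le (hH : IsPronormal H) {g : G}
    (hg : H ⊔ conjSubgroup g H ≤ normalizer (H : Set G)) : g ∈ normalizer (H : Set G) := by
  obtain ⟨x, hx, hxg⟩ := hH g
  rw [← conjSubgroup_eq_self_iff, ← hxg, conjSubgroup_eq_self_iff]
  exact hg hx

theorem upperCentralSeries_le_normalizer (hH : IsPronormal H) :
    ∀ n, Subgroup.upperCentralSeries G n ≤ normalizer (H : Set G)
  | 0 => bot_le
  | n + 1 => fun _ hz => hH.mem_normalizer_of_sup_le <| sup_le le_normalizer <|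
      (conjSubgroup_le_sup_upperCentralSeries hz H).trans
        (sup_le le_normalizer (hH.upperCentralSeries_le_normalizer n))

theorem hypercenter_le_normalizer (hH : IsPronormal H) :
    hypercenter G ≤ normalizer (H : Set G) :=
  iSup_le hH.upperCentralSeries_le_normalizer

end IsPronormal

namespace Subgroup

variable {G : Type*} [Group G]

theorem eq_top_of_forall_exists_sylow_le [Finite G] {K : Subgroup G}
    (h : ∀ p : ℕ, p.Prime → ∃ P : Sylow p G, (P : Subgroup G) ≤ K) : K = ⊤ := by
  rw [← index_eq_one]
  by_contra hne
  obtain ⟨p, hp, hdvd⟩ := Nat.exists_prime_and_dvd hne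
  have : Fact p.Prime := ⟨hp⟩
  obtain ⟨P, hP⟩ := h p hp
  have : (P : Subgroup G).FiniteIndex := ⟨index_ne_zero_of_finite⟩
  exact P.not_dvd_index (hdvd.trans (index_dvd_of_le hP))

theorem le_centralizer_of_le_normalizer_of_disjoint {X Q : Subgroup G} [hX : X.Normal]
    (hXQ : X ≤ normalizer (Q : Set G)) (hdisj : Disjoint X Q) : Q ≤ centralizer (X : Set G) := by
  intro u hu
  rw [mem_centralizer_iff]
  intro x hx
  have hxuX : ⁅x, u⁆ ∈ X := by
    rw [show ⁅x, u⁆ = x * (u * x⁻¹ * u⁻¹) by group]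
    exact mul_mem hx (hX.conj_mem _ (inv_mem hx) u)
  have hxuQ : ⁅x, u⁆ ∈ Q := mul_mem ((mem_normalizer_iff.mp (hXQ hx) u).mp hu) (inv_mem hu)
  exact commutatorElement_eq_one_iff_mul_comm.mp (disjoint_def.mp hdisj hxuX hxuQ)

theorem mem_upperCentralSeries_of_sup_centralizer_eq_top {X P : Subgroup G} [hX : X.Normal]
    (hXP : X ≤ P) (hsup : P ⊔ centralizer (X : Set G) = ⊤) (n : ℕ) {x : G} (hx : x ∈ X)
    (hxn : (⟨x, hXP hx⟩ : P) ∈ upperCentralSeries P n) : x ∈ upperCentralSeries G n := by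
  induction n generalizing x with
  | zero => simpa using hxn
  | succ n ih =>
    intro g
    obtain ⟨a, ha, c, hc, rfl⟩ := mem_sup_of_normal_right.mp (hsup ▸ mem_top g)
    have hxc : ⁅x, c⁆ = 1 := commutatorElement_eq_one_iff_mul_comm.mpr (hc x hx)
    rw [commutatorElement_mul_right_eq_mul_conj, hxc, mul_one, mul_inv_cancel_right]
    have hxa : ⁅x, a⁆ ∈ X := by
      rw [show ⁅x, a⁆ = x * (a * x⁻¹ * a⁻¹) by group]
      exact mul_mem hx (hX.conj_mem _ (inv_mem hx) a)
    exact ih hxa (mem_upperCentralSeries_succ_iff.mp hxn ⟨a, ha⟩)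

theorem le_hypercenter_of_sup_centralizer_eq_top {X P : Subgroup G} [X.Normal]
    [Group.IsNilpotent P] (hXP : X ≤ P) (hsup : P ⊔ centralizer (X : Set G) = ⊤) :
    X ≤ hypercenter G := fun _ hx =>
  upperCentralSeries_le_hypercenter _ <|
    mem_upperCentralSeries_of_sup_centralizer_eq_top hXP hsup _ hx <| by
      rw [upperCentralSeries_nilpotencyClass]
      exact mem_top _

variable (G) in
def iInfSylowNormalizer : Subgroup G :=
  ⨅ (p : ℕ) (_ : p.Prime) (P : Sylow p G), normalizer ((P : Subgroup G) : Set G)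

theorem iInfSylowNormalizer_le_normalizer {p : ℕ} (hp : p.Prime) (P : Sylow p G) :
    iInfSylowNormalizer G ≤ normalizer ((P : Subgroup G) : Set G) :=
  iInf_le_of_le p (iInf_le_of_le hp (iInf_le _ P))

instance normal_iInfSylowNormalizer : (iInfSylowNormalizer G).Normal where
  conj_mem n hn c := by
    simp only [iInfSylowNormalizer, mem_iInf] at hn ⊢
    intro p hp P
    refine Sylow.smul_eq_iff_mem_normalizer.mp ?_
    rw [mul_smul, mul_smul, Sylow.smul_eq_iff_mem_normalizer.mpr (hn p hp (c⁻¹ • P)),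
      smul_inv_smul]

section Prime

variable {p : ℕ} [Fact p.Prime]

theorem iInfSylowNormalizer_inf_le (P P' : Sylow p G) :
    iInfSylowNormalizer G ⊓ P ≤ P' := by
  have hN : iInfSylowNormalizer G ⊓ P ≤ normalizer ((P' : Subgroup G) : Set G) :=
    inf_le_left.trans (iInfSylowNormalizer_le_normalizer Fact.out P')
  exact (le_inf le_rfl hN).trans
    ((P.isPGroup'.to_inf_right.inf_normalizer_sylow P').le.trans inf_le_right)

instance normal_iInfSylowNormalizer_inf (P : Sylow p G) :
    (iInfSylowNormalizer G ⊓ P).Normal where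
  conj_mem x hx c := by
    refine ⟨normal_iInfSylowNormalizer.conj_mem x hx.1 c, ?_⟩
    have hx' : x ∈ conjSubgroup c (P : Subgroup G) := iInfSylowNormalizer_inf_le P (c⁻¹ • P) hx
    exact mem_conjSubgroup.mp hx'

theorem sylow_le_centralizer_iInfSylowNormalizer_inf {q : ℕ} [Fact q.Prime] (hqp : q ≠ p)
    (P : Sylow p G) (Q : Sylow q G) :
    (Q : Subgroup G) ≤ centralizer ((iInfSylowNormalizer G ⊓ P : Subgroup G) : Set G) :=
  le_centralizer_of_le_normalizer_of_disjoint
    (inf_le_left.trans (iInfSylowNormalizer_le_normalizer Fact.out Q))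
    (IsPGroup.disjoint_of_ne p q hqp.symm _ _ P.isPGroup'.to_inf_right Q.isPGroup')

variable [Finite G]

theorem sylow_sup_centralizer_iInfSylowNormalizer_inf (P : Sylow p G) :
    (P : Subgroup G) ⊔ centralizer ((iInfSylowNormalizer G ⊓ P : Subgroup G) : Set G) = ⊤ := by
  refine eq_top_of_forall_exists_sylow_le fun q hq => ?_
  by_cases hqp : q = p
  · subst hqp
    exact ⟨P, le_sup_left⟩
  · have : Fact q.Prime := ⟨hq⟩
    obtain ⟨Q⟩ := (inferInstance : Nonempty (Sylow q G))
    exact ⟨Q, (sylow_le_centralizer_iInfSylowNormalizer_inf hqp P Q).trans le_sup_right⟩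

theorem iInfSylowNormalizer_inf_le_hypercenter (P : Sylow p G) :
    iInfSylowNormalizer G ⊓ P ≤ hypercenter G :=
  have : Group.IsNilpotent P := P.isPGroup'.isNilpotent
  le_hypercenter_of_sup_centralizer_eq_top inf_le_right
    (sylow_sup_centralizer_iInfSylowNormalizer_inf P)

end Prime

theorem iInfSylowNormalizer_le_hypercenter [Finite G] : iInfSylowNormalizer G ≤ hypercenter G := by
  rw [← subgroupOf_eq_top]
  refine eq_top_of_forall_exists_sylow_le fun r hr => ?_
  have : Fact r.Prime := ⟨hr⟩
  obtain ⟨R'⟩ := (inferInstance : Nonempty (Sylow r (iInfSylowNormalizer G)))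
  obtain ⟨R, hR⟩ := (R'.isPGroup'.map (iInfSylowNormalizer G).subtype).exists_le_sylow
  exact ⟨R', fun s hs => iInfSylowNormalizer_inf_le_hypercenter R ⟨s.2, hR ⟨s, hs, rfl⟩⟩⟩

end Subgroup

theorem iInf_normalizer_pronormal_eq_iInf_normalizer_sylow
    (G : Type*) [Group G] [Finite G] :
    (⨅ (H : Subgroup G) (_ : IsPronormal H), Subgroup.normalizer (H : Set G)) =
      ⨅ (p : ℕ) (_ : p.Prime) (P : Sylow p G), Subgroup.normalizer ((P : Subgroup G) : Set G) := by
  refine le_antisymm ?_ ?_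
  · refine le_iInf fun p => le_iInf fun hp => le_iInf fun P => ?_
    have : Fact p.Prime := ⟨hp⟩
    exact iInf₂_le (P : Subgroup G) P.isPronormal
  · exact le_iInf₂ fun H hH =>
      Subgroup.iInfSylowNormalizer_le_hypercenter.trans hH.hypercenter_le_normalizer
end

section
/- Let G be a finite group. Then the intersection of the normalizers of all subgroups of G satisfying the subnormalizer condition in G equals the intersection of the normalizers of all Sylow subgroups of G (equivalently, the hypercenter Z_∞(G)). That is, ⋂_{H satisfying the subnormalizer condition in G} N_G(H) = ⋂_{p prime, P ∈ Syl_p(G)} N_G(P). -/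
/-! A Sylow subgroup `P` normal in `K` is the only Sylow subgroup of `K`, so every element
normalizing `K` fixes `P`: Sylow subgroups satisfy the subnormalizer condition, which gives `≤`.
Conversely, if `H` satisfies the condition, induction on `n` shows that `H` is normal in
`H ⊔ Z_n(G)`, which is normalized by `Z_{n+1}(G)`; hence the hypercenter normalizes `H`.
It remains to prove Baer's inclusion of the intersection `D` of the Sylow normalizers in the
hypercenter. Since `D` maps into the corresponding intersection for `G ⧸ Z(G)`, induction on `|G|`
reduces this to `Z(G) ≠ 1` whenever `D ≠ 1`. Choose a Sylow `p`-subgroup `P` with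
`N = D ⊓ P ≠ 1`. Then `N` is a normal `p`-subgroup, so the `p`-group `P` acting on it by
conjugation fixes some `c ≠ 1`, while each Sylow `q`-subgroup `Q` with `q ≠ p` centralizes `N`
because `[N, Q] ≤ N ⊓ Q = 1`. Hence `c` is central. -/

open Subgroup

def sylowNormalizerInf (G : Type*) [Group G] : Subgroup G :=
  ⨅ (p : ℕ) (_ : p.Prime) (P : Sylow p G), normalizer ((P : Subgroup G) : Set G)

section

variable {G : Type*} [Group G]

lemma sylowNormalizerInf_le_normalizer {p : ℕ} (hp : p.Prime) (P : Sylow p G) :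
    sylowNormalizerInf G ≤ normalizer (P : Set G) :=
  (iInf₂_le p hp).trans (iInf_le _ P)

lemma le_sylowNormalizerInf {N : Subgroup G}
    (h : ∀ p, p.Prime → ∀ P : Sylow p G, N ≤ normalizer (P : Set G)) :
    N ≤ sylowNormalizerInf G :=
  le_iInf₂ fun p hp => le_iInf (h p hp)

lemma sylowNormalizerInf_normal : (sylowNormalizerInf G).Normal := by
  refine ⟨fun x hx g => mem_iInf.mpr fun p => mem_iInf.mpr fun hp => mem_iInf.mpr fun P => ?_⟩
  have : Fact p.Prime := ⟨hp⟩
  have hx' := Sylow.smul_eq_iff_mem_normalizer.mpr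
    (sylowNormalizerInf_le_normalizer hp (g⁻¹ • P) hx)
  exact Sylow.smul_eq_iff_mem_normalizer.mp (by rw [mul_smul, mul_smul, hx', smul_inv_smul])

lemma inf_sylow_le_of_le_normalizer {p : ℕ} {N : Subgroup G} {P : Sylow p G}
    (h : N ≤ normalizer (P : Set G)) (Q : Sylow p G) : N ⊓ Q ≤ P := by
  have := (IsPGroup.to_inf_right (H := N) Q.isPGroup').inf_normalizer_sylow P
  rw [inf_eq_left.mpr (inf_le_left.trans h)] at this
  exact this.le.trans inf_le_right

lemma normal_inf_sylow {p : ℕ} [Fact p.Prime] {N : Subgroup G} [hN : N.Normal]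
    (h : ∀ Q : Sylow p G, N ≤ normalizer (Q : Set G)) (P : Sylow p G) :
    (N ⊓ (P : Subgroup G)).Normal := by
  refine ⟨fun x hx g => ⟨hN.conj_mem x hx.1 g, inf_sylow_le_of_le_normalizer (h P) (g • P)
    ⟨hN.conj_mem x hx.1 g, ?_⟩⟩⟩
  rw [Sylow.coe_subgroup_smul]
  exact smul_mem_pointwise_smul x (MulAut.conj g) _ hx.2

lemma IsPGroup.inf_centralizer_ne_bot {p : ℕ} [Fact p.Prime] {N P : Subgroup G} [N.Normal]
    [Finite N] (hN : IsPGroup p N) (hP : IsPGroup p P) (hN1 : N ≠ ⊥) :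
    N ⊓ centralizer (P : Set G) ≠ ⊥ := by
  let _ : MulAction P N := MulAction.compHom N ((MulAut.conjNormal (H := N)).comp P.subtype)
  have hsmul (g : P) (x : N) : ((g • x : N) : G) = g * x * (g : G)⁻¹ := rfl
  obtain ⟨n, hn0, hcard⟩ := hN.nontrivial_iff_card.mp ((nontrivial_iff_ne_bot N).mpr hN1)
  obtain ⟨c, hc_fixed, hc1⟩ := hP.exists_fixed_point_of_prime_dvd_card_of_fixed_point N
    (hcard ▸ dvd_pow_self p hn0.ne') (a := 1) fun g => Subtype.ext (by simp [hsmul])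
  refine (ne_bot_iff_exists_ne_one).mpr ⟨⟨c, c.2, fun g hg => ?_⟩, ?_⟩
  · have := congrArg Subtype.val (hc_fixed ⟨g, hg⟩)
    rwa [hsmul, mul_inv_eq_iff_eq_mul] at this
  · exact fun h => hc1 (Subtype.ext (congrArg Subtype.val h).symm)

lemma commute_of_mem_normal_of_mem_normalizer {N Q : Subgroup G} (hN : N.Normal)
    (hNQ : Disjoint N Q) {x y : G} (hx : x ∈ N) (hxQ : x ∈ normalizer (Q : Set G))
    (hy : y ∈ Q) : Commute x y := by
  have hN' : x * y * x⁻¹ * y⁻¹ ∈ N := by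
    simpa only [mul_assoc] using N.mul_mem hx (hN.conj_mem x⁻¹ (N.inv_mem hx) y)
  have hQ : x * y * x⁻¹ * y⁻¹ ∈ Q :=
    Q.mul_mem ((mem_normalizer_iff.mp hxQ y).mp hy) (Q.inv_mem hy)
  exact mul_inv_eq_iff_eq_mul.mp (mul_inv_eq_one.mp (hNQ.le_bot ⟨hN', hQ⟩))

lemma Subgroup.eq_top_of_forall_sylow_le_s14 [Finite G] {T : Subgroup G}
    (h : ∀ q, q.Prime → ∃ Q : Sylow q G, (Q : Subgroup G) ≤ T) : T = ⊤ := by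
  rw [← index_eq_one, Nat.eq_one_iff_not_exists_prime_dvd]
  intro q hq hdvd
  have : Fact q.Prime := ⟨hq⟩
  obtain ⟨Q, hQ⟩ := h q hq
  exact Q.not_dvd_index (hdvd.trans (index_dvd_of_le hQ))

lemma exists_sylow_inf_ne_bot [Finite G] {H : Subgroup G} (hH : H ≠ ⊥) :
    ∃ p, p.Prime ∧ ∃ P : Sylow p G, H ⊓ (P : Subgroup G) ≠ ⊥ := by
  set p := (Nat.card H).minFac
  have hp : p.Prime := Nat.minFac_prime ((one_lt_card_iff_ne_bot H).mpr hH).ne'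
  have : Fact p.Prime := ⟨hp⟩
  obtain ⟨g, hg⟩ := exists_prime_orderOf_dvd_card' p (Nat.minFac_dvd _)
  have hgp : IsPGroup p (zpowers (g : G)) :=
    IsPGroup.of_card (n := 1) (by rw [Nat.card_zpowers, orderOf_submonoid, hg, pow_one])
  obtain ⟨P, hP⟩ := hgp.exists_le_sylow
  refine ⟨p, hp, P, (ne_bot_iff_exists_ne_one).mpr ⟨⟨g, g.2, hP (mem_zpowers _)⟩, ?_⟩⟩
  intro h1
  have : orderOf (g : G) = 1 := by simpa using congrArg Subtype.val h1
  rw [orderOf_submonoid, hg] at this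
  exact hp.one_lt.ne' this

lemma center_ne_bot_of_sylowNormalizerInf_ne_bot [Finite G] (h : sylowNormalizerInf G ≠ ⊥) :
    center G ≠ ⊥ := by
  obtain ⟨p, hp, P, hDP⟩ := exists_sylow_inf_ne_bot h
  have : Fact p.Prime := ⟨hp⟩
  have := sylowNormalizerInf_normal (G := G)
  have hNn := normal_inf_sylow (fun Q => sylowNormalizerInf_le_normalizer hp Q) P
  set N := sylowNormalizerInf G ⊓ (P : Subgroup G)
  have hNp : IsPGroup p N := IsPGroup.to_inf_right P.isPGroup'
  obtain ⟨⟨c, hcN, hcP⟩, hc1⟩ :=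
    (ne_bot_iff_exists_ne_one).mp (hNp.inf_centralizer_ne_bot P.isPGroup' hDP)
  have hcentral : centralizer {c} = ⊤ := by
    refine eq_top_of_forall_sylow_le_s14 fun q hq => ?_
    by_cases hqp : q = p
    · subst hqp
      exact ⟨P, fun g hg => mem_centralizer_singleton_iff.mpr (mem_centralizer_iff.mp hcP g hg)⟩
    have : Fact q.Prime := ⟨hq⟩
    obtain ⟨Q⟩ := (inferInstance : Nonempty (Sylow q G))
    refine ⟨Q, fun y hy => mem_centralizer_singleton_iff.mpr ?_⟩
    exact (commute_of_mem_normal_of_mem_normalizer hNn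
      (IsPGroup.disjoint_of_ne p q (Ne.symm hqp) _ _ hNp Q.isPGroup')
      hcN (sylowNormalizerInf_le_normalizer hq Q hcN.1) hy).symm
  exact (ne_bot_iff_exists_ne_one).mpr ⟨⟨c, centralizer_eq_top_iff_subset.mp hcentral rfl⟩,
    fun h => hc1 (Subtype.ext (by simpa using h))⟩

lemma map_sylowNormalizerInf_le [Finite G] {H : Type*} [Group H] {f : G →* H}
    (hf : Function.Surjective f) : (sylowNormalizerInf G).map f ≤ sylowNormalizerInf H := by
  refine le_sylowNormalizerInf fun p hp P => ?_
  have : Fact p.Prime := ⟨hp⟩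
  obtain ⟨Q, rfl⟩ := Sylow.mapSurjective_surjective hf p P
  exact (map_mono (sylowNormalizerInf_le_normalizer hp Q)).trans (le_normalizer_map f)

lemma card_quotient_center_lt [Finite G] (h : center G ≠ ⊥) :
    Nat.card (G ⧸ center G) < Nat.card G := by
  rw [card_eq_card_quotient_mul_card_subgroup (center G)]
  exact lt_mul_of_one_lt_right Nat.card_pos ((one_lt_card_iff_ne_bot _).mpr h)

theorem exists_mem_upperCentralSeries_of_mem_sylowNormalizerInf [Finite G] {x : G}
    (hx : x ∈ sylowNormalizerInf G) : ∃ n, x ∈ Subgroup.upperCentralSeries G n := by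
  induction h : Nat.card G using Nat.strong_induction_on generalizing G with
  | _ n ih =>
  by_cases hD : sylowNormalizerInf G = ⊥
  · exact ⟨0, by rwa [hD] at hx⟩
  have hcard := h ▸ card_quotient_center_lt (center_ne_bot_of_sylowNormalizerInf_ne_bot hD)
  obtain ⟨m, hm⟩ := ih _ hcard
    (map_sylowNormalizerInf_le (QuotientGroup.mk'_surjective _) (mem_map_of_mem _ hx)) rfl
  exact ⟨m + 1, (Subgroup.comap_upperCentralSeries_quotient_center (G := G) m).le hm⟩

lemma upperCentralSeries_succ_le_normalizer {K : Subgroup G} {n : ℕ}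
    (h : Subgroup.upperCentralSeries G n ≤ K) :
    Subgroup.upperCentralSeries G (n + 1) ≤ normalizer (K : Set G) :=
  le_normalizer_iff_commutator_le_right.mpr ((commutator_mono le_rfl le_top).trans
    ((Subgroup.commutator_upperCentralSeries_top_le G n).trans h))

lemma SubnormalizerCondition.upperCentralSeries_le_normalizer {H : Subgroup G}
    (hH : SubnormalizerCondition H) (n : ℕ) :
    Subgroup.upperCentralSeries G n ≤ normalizer (H : Set G) := by
  suffices ∀ n, H ⊔ Subgroup.upperCentralSeries G n ≤ normalizer (H : Set G) from
    le_sup_right.trans (this n)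
  intro n
  induction n with
  | zero => simpa using le_normalizer
  | succ n ih =>
    have hK := hH _ le_sup_left ((normal_subgroupOf_iff_le_normalizer le_sup_left).mpr ih)
    exact sup_le le_normalizer ((upperCentralSeries_succ_le_normalizer le_sup_right).trans hK)

lemma Sylow.subnormalizerCondition {p : ℕ} [Fact p.Prime] [Finite G] (P : Sylow p G) :
    SubnormalizerCondition (P : Subgroup G) := by
  intro K hPK hnorm g hg
  have hgP : ↑(g • P) ≤ K :=
    calc ↑(g • P) = (P : Subgroup G).map (MulAut.conj g) := rfl
      _ ≤ K.map (MulAut.conj g) := map_mono hPK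
      _ = K := mem_normalizer_iff_map_conj_eq.mp hg
  have := Sylow.unique_of_normal (P.subtype hPK) (by rwa [Sylow.coe_subtype])
  exact Sylow.smul_eq_iff_mem_normalizer.mp
    (Sylow.subtype_injective (Subsingleton.elim ((g • P).subtype hgP) (P.subtype hPK)))

end

theorem iInf_normalizer_subnormalizerCondition_eq_iInf_normalizer_sylow
    (G : Type*) [Group G] [Finite G] :
    (⨅ (H : Subgroup G) (_ : SubnormalizerCondition H), Subgroup.normalizer (H : Set G)) =
      ⨅ (p : ℕ) (_ : p.Prime) (P : Sylow p G), Subgroup.normalizer ((P : Subgroup G) : Set G) := by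
  apply le_antisymm
  · refine le_iInf₂ fun p hp => le_iInf fun P => ?_
    have : Fact p.Prime := ⟨hp⟩
    exact iInf₂_le _ P.subnormalizerCondition
  · refine le_iInf₂ fun H hH x hx => ?_
    obtain ⟨n, hn⟩ := exists_mem_upperCentralSeries_of_mem_sylowNormalizerInf hx
    exact hH.upperCentralSeries_le_normalizer n hn
end
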